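/- Let V be a free Z[q,q⁻¹]-module with a pre-canonical structure (ψ, ⟨-,-⟩, {a_c}) with pairing valued in Z[q,q⁻¹] and invertible evaluation map, admitting a canonical basis {b_c}. Let ψ* be the dual bar-involution and {a*_c}, {b*_c} the right dual bases of {a_c}, {b_c}. Then the dual basis {b*_c} is a canonical basis for the dual pre-canonical structure (conjugated pairing, ψ*, {a*_c} with the opposite partial order); in particular each b*_c is ψ*-invariant, the transition matrix from {b*_c} to {a*_c} is triangular with respect to the opposite order, and the dual basis vectors are almost orthonormal for the conjugated pairing. -/

import Mathlib

/-!
Pairing against a right dual basis reads off coordinates: `⟨a_d, v⟩` and `⟨b_d, v⟩` are the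
coordinates of `v` in `a*` and in `b*`. Hence `⟨b_d, ψ* b*_c⟩ = bar ⟨ψ b_d, b*_c⟩ = δ_{d,c}`
gives `ψ* b*_c = b*_c`. Since `b_m - a_m` lies in the span of the `a_d` with `d < m`, a minimal
`m` outside the upper set of `c` with `⟨a_m, b*_c⟩ ≠ 0` would have
`⟨a_m, b*_c⟩ = ⟨b_m, b*_c⟩ = 0`; so the `a*`-coordinates of `b*_c` live on `{d | c ≤ d}`, and
the same identity gives `1` at `d = c`. Finally `bar ⟨b*_c, b*_{c'}⟩` is the `c'`-coordinate of
`b*_c` in `b`, i.e. an entry of the column `s` with `G s = e_c` for the Gram matrix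
`G = (⟨b_d, b_e⟩)`. As `G - 1` has entries in `q⁻¹ℤ[q⁻¹]`, the identity
`s - e_c = -(G - 1) s` lowers any bound `N ≥ 0` on the `q`-degrees of `s - e_c` by one, so these
degrees are negative.
-/

noncomputable section

open LaurentPolynomial
open scoped Classical

abbrev Rq : Type := LaurentPolynomial ℤ

def bar : Rq ≃+* Rq := (LaurentPolynomial.invert (R := ℤ)).toRingEquiv

/-- `g ∈ δ + q⁻¹ℤ[[q⁻¹]]` for a Laurent polynomial `g`:  the coefficient of
`q⁰` is `δ` and the coefficients of all positive powers of `q` vanish. -/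
def DeltaPlusLowR (g : Rq) (δ : ℤ) : Prop :=
  g.coeff 0 = δ ∧ ∀ k : ℤ, 0 < k → g.coeff k = 0

variable {C : Type*} [PartialOrder C] {V : Type*} [AddCommGroup V] [Module Rq V]

structure PrecanonicalR (C : Type*) [PartialOrder C] (V : Type*) [AddCommGroup V]
    [Module Rq V] where
  ψ : V →+ V
  ψ_invol : ∀ v, ψ (ψ v) = v
  ψ_antilinear : ∀ (r : Rq) (v : V), ψ (r • v) = bar r • ψ v
  pair : V →+ V →+ Rq
  pair_sesq_left : ∀ (r : Rq) (u v : V), pair (r • u) v = bar r * pair u v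
  pair_sesq_right : ∀ (r : Rq) (u v : V), pair u (r • v) = r * pair u v
  flip_unitary : ∀ u v : V, pair u v = pair (ψ v) (ψ u)
  std : Module.Basis C Rq V
  ψ_upper : ∀ c : C,
    ψ (std c) - std c ∈ Submodule.span Rq (std '' {c' : C | c' < c})

structure IsCanonicalBasisR (P : PrecanonicalR C V) (b : Module.Basis C Rq V) : Prop where
  bar_invariant : ∀ c : C, P.ψ (b c) = b c
  upper_triangular : ∀ c : C,
    b c - P.std c ∈ Submodule.span Rq (P.std '' {c' : C | c' < c})
  almost_orthonormal : ∀ c c' : C,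
    DeltaPlusLowR (P.pair (b c) (b c')) (if c = c' then 1 else 0)

section DegreeFiltration

variable {R : Type*} [Ring R]

def degreeLE (N : ℤ) : AddSubgroup R[T;T⁻¹] where
  carrier := {f | ∀ k, N < k → f.coeff k = 0}
  zero_mem' _ _ := rfl
  add_mem' hf hg k hk := by simp [AddMonoidAlgebra.coeff_add, hf k hk, hg k hk]
  neg_mem' hf k hk := by simp [AddMonoidAlgebra.coeff_neg, hf k hk]

lemma mem_degreeLE {N : ℤ} {f : R[T;T⁻¹]} : f ∈ degreeLE N ↔ ∀ k, N < k → f.coeff k = 0 :=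
  Iff.rfl

lemma degreeLE_mono {M N : ℤ} (h : M ≤ N) : degreeLE (R := R) M ≤ degreeLE N :=
  fun _ hf k hk => hf k (h.trans_lt hk)

lemma one_mem_degreeLE_zero : (1 : R[T;T⁻¹]) ∈ degreeLE 0 := fun k hk => by
  simpa [hk.ne'] using (C_apply (1 : R) k)

lemma mul_mem_degreeLE {M N : ℤ} {f g : R[T;T⁻¹]} (hf : f ∈ degreeLE M) (hg : g ∈ degreeLE N) :
    f * g ∈ degreeLE (M + N) := by
  intro k hk
  by_contra hne
  obtain ⟨i, hi, j, hj, rfl⟩ := Finset.mem_add.mp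
    (AddMonoidAlgebra.support_coeff_mul_subset f g (Finsupp.mem_support_iff.mpr hne))
  have hiM : i ≤ M := not_lt.mp fun h => Finsupp.mem_support_iff.mp hi (hf i h)
  have hjN : j ≤ N := not_lt.mp fun h => Finsupp.mem_support_iff.mp hj (hg j h)
  omega

lemma exists_mem_degreeLE (f : R[T;T⁻¹]) : ∃ N : ℕ, f ∈ degreeLE N := by
  refine ⟨f.coeff.support.sup Int.toNat, fun k hk => ?_⟩
  by_contra hne
  have := Finset.le_sup (f := Int.toNat) (Finsupp.mem_support_iff.mpr hne)
  omega

lemma Finsupp.exists_forall_mem_degreeLE {ι : Type*} (x : ι →₀ R[T;T⁻¹]) :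
    ∃ N : ℕ, ∀ d, x d ∈ degreeLE N := by
  choose n hn using fun d => exists_mem_degreeLE (x d)
  refine ⟨x.support.sup n, fun d => ?_⟩
  by_cases hd : d ∈ x.support
  · exact degreeLE_mono (by exact_mod_cast Finset.le_sup hd) (hn d)
  · rw [Finsupp.notMem_support_iff.mp hd]
    exact zero_mem _

lemma sub_single_mem_degreeLE_of_almost_identity {ι : Type*} (G : ι → ι → R[T;T⁻¹])
    (hG : ∀ d e, G d e - (if d = e then 1 else 0) ∈ degreeLE (-1)) (s : ι →₀ R[T;T⁻¹]) (c : ι)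
    (hs : ∀ d, ∑ e ∈ s.support, s e * G d e = if d = c then 1 else 0) (d : ι) :
    (s - Finsupp.single c 1 : ι →₀ R[T;T⁻¹]) d ∈ degreeLE (-1) := by
  set x : ι →₀ R[T;T⁻¹] := s - Finsupp.single c 1
  have hx : ∀ d, x d = -∑ e ∈ s.support, s e * (G d e - if d = e then 1 else 0) := by
    intro d
    have hdiag : ∑ e ∈ s.support, s e * (if d = e then 1 else 0) = s d := by
      simp_rw [mul_ite, mul_one, mul_zero, Finset.sum_ite_eq, ite_eq_left_iff,
        Finsupp.notMem_support_iff, eq_comm (a := (0 : R[T;T⁻¹])), imp_self]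
    simp only [x, mul_sub, Finset.sum_sub_distrib, hs d, hdiag, Finsupp.coe_sub, Pi.sub_apply,
      Finsupp.single_apply, eq_comm (a := c)]
    abel
  have step : ∀ N : ℤ, 0 ≤ N → (∀ d, x d ∈ degreeLE N) → ∀ d, x d ∈ degreeLE (N - 1) := by
    intro N hN hxN d
    rw [hx d]
    refine neg_mem (sum_mem fun e _ => ?_)
    have hse : s e ∈ degreeLE N := by
      have hsingle : Finsupp.single c (1 : R[T;T⁻¹]) e ∈ degreeLE N := by
        rw [Finsupp.single_apply]
        split_ifs
        exacts [degreeLE_mono hN one_mem_degreeLE_zero, zero_mem _]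
      simpa [x] using add_mem (hxN e) hsingle
    simpa [sub_eq_add_neg] using mul_mem_degreeLE hse (hG d e)
  obtain ⟨N, hN⟩ := x.exists_forall_mem_degreeLE
  induction N with
  | zero => exact step 0 le_rfl (by simpa using hN) d
  | succ n ih => exact ih (by simpa using step (n + 1) (by positivity) (by exact_mod_cast hN))

end DegreeFiltration

lemma deltaPlusLowR_iff (g : Rq) (δ : ℤ) :
    DeltaPlusLowR g δ ↔ g - LaurentPolynomial.C δ ∈ degreeLE (-1) := by
  simp only [DeltaPlusLowR, mem_degreeLE, AddMonoidAlgebra.coeff_sub, Finsupp.sub_apply, C_apply]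
  constructor
  · rintro ⟨h0, hpos⟩ k hk
    rcases eq_or_lt_of_le (show 0 ≤ k by omega) with rfl | hk
    · simp [h0]
    · simp [hpos k hk, hk.ne']
  · intro h
    exact ⟨sub_eq_zero.mp (by simpa using h 0 (by norm_num)),
      fun k hk => by simpa [hk.ne'] using h k (by omega)⟩

lemma bar_bar (x : Rq) : bar (bar x) = x :=
  involutive_invert x

lemma Module.Basis.sub_mem_span_image_of_repr {ι R M : Type*} [Ring R] [AddCommGroup M]
    [Module R M] (β : Module.Basis ι R M) {v : M} {c : ι} {s : Set ι} (hc : β.repr v c = 1)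
    (hs : ∀ d, d ≠ c → β.repr v d ≠ 0 → d ∈ s) : v - β c ∈ Submodule.span R (β '' s) := by
  rw [Module.Basis.mem_span_image]
  intro d hd
  rw [Finset.mem_coe, Finsupp.mem_support_iff, map_sub, β.repr_self, Finsupp.sub_apply,
    Finsupp.single_apply] at hd
  by_cases hdc : d = c
  · subst hdc
    simp [hc] at hd
  · rw [if_neg (Ne.symm hdc), sub_zero] at hd
    exact hs d hdc hd

namespace PrecanonicalR

variable (P : PrecanonicalR C V)

lemma pair_eq_sum_repr_left (β : Module.Basis C Rq V) (v w : V) :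
    P.pair v w = ∑ d ∈ (β.repr v).support, bar (β.repr v d) * P.pair (β d) w := by
  conv_lhs => rw [← β.linearCombination_repr v, Finsupp.linearCombination_apply, Finsupp.sum]
  simp only [map_sum, AddMonoidHom.finsetSum_apply, P.pair_sesq_left]

lemma pair_eq_sum_repr_right (β : Module.Basis C Rq V) (u v : V) :
    P.pair u v = ∑ d ∈ (β.repr v).support, β.repr v d * P.pair u (β d) := by
  conv_lhs => rw [← β.linearCombination_repr v, Finsupp.linearCombination_apply, Finsupp.sum]
  simp only [map_sum, P.pair_sesq_right]

variable {P}

lemma pair_eq_repr_of_dual {β γ : Module.Basis C Rq V}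
    (h : ∀ c c', P.pair (β c) (γ c') = if c = c' then 1 else 0) (v : V) (d : C) :
    P.pair (β d) v = γ.repr v d := by
  rw [P.pair_eq_sum_repr_right γ]
  simp_rw [h, mul_ite, mul_one, mul_zero, Finset.sum_ite_eq,
    ite_eq_left_iff, Finsupp.notMem_support_iff, eq_comm (a := (0 : Rq)), imp_self]

lemma pair_eq_bar_repr_of_dual {β γ : Module.Basis C Rq V}
    (h : ∀ c c', P.pair (β c) (γ c') = if c = c' then 1 else 0) (v : V) (d : C) :
    P.pair v (γ d) = bar (β.repr v d) := by
  rw [P.pair_eq_sum_repr_left β]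
  simp_rw [h, mul_ite, mul_one, mul_zero, Finset.sum_ite_eq',
    ite_eq_left_iff, Finsupp.notMem_support_iff]
  intro h0
  rw [h0, map_zero]

lemma pair_eq_zero_of_mem_span {f : C → V} {s : Set C} {w : V}
    (h : ∀ d ∈ s, P.pair (f d) w = 0) {x : V} (hx : x ∈ Submodule.span Rq (f '' s)) :
    P.pair x w = 0 := by
  induction hx using Submodule.span_induction with
  | mem y hy => obtain ⟨d, hd, rfl⟩ := hy; exact h d hd
  | zero => simp
  | add y z _ _ hy hz => rw [map_add, AddMonoidHom.add_apply, hy, hz, add_zero]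
  | smul r y _ hy => rw [P.pair_sesq_left, hy, mul_zero]

lemma pair_std_eq_pair_of_forall_lt {b : C → V} {c : C}
    (htri : b c - P.std c ∈ Submodule.span Rq (P.std '' {c' : C | c' < c})) {w : V}
    (h : ∀ d < c, P.pair (P.std d) w = 0) : P.pair (P.std c) w = P.pair (b c) w := by
  have hzero : P.pair (b c - P.std c) w = 0 := pair_eq_zero_of_mem_span h htri
  rwa [map_sub, AddMonoidHom.sub_apply, sub_eq_zero, eq_comm] at hzero

lemma pair_std_eq_zero_of_isLowerSet {b : C → V}
    (htri : ∀ c, b c - P.std c ∈ Submodule.span Rq (P.std '' {c' : C | c' < c}))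
    {U : Set C} (hU : IsLowerSet U) {w : V} (hfin : {d | P.pair (P.std d) w ≠ 0}.Finite)
    (h : ∀ d ∈ U, P.pair (b d) w = 0) : ∀ d ∈ U, P.pair (P.std d) w = 0 := by
  by_contra! hex
  obtain ⟨m, hmin⟩ := (hfin.subset fun d hd => hd.2).exists_minimal
    (show {d | d ∈ U ∧ P.pair (P.std d) w ≠ 0}.Nonempty from hex)
  obtain ⟨hmU, hm⟩ := hmin.prop
  refine hm ((pair_std_eq_pair_of_forall_lt (htri m) fun d hdm => ?_).trans (h m hmU))
  by_contra hd
  exact hmin.not_lt ⟨hU hdm.le hmU, hd⟩ hdm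

end PrecanonicalR

section DualBasis

variable {P : PrecanonicalR C V} {b astar bstar : Module.Basis C Rq V}

lemma dual_bar_invariant
    (hbstar : ∀ c c' : C, P.pair (b c) (bstar c') = if c = c' then 1 else 0)
    (hb : ∀ c, P.ψ (b c) = b c) {ψstar : V →+ V}
    (hstar_def : ∀ u v : V, P.pair (P.ψ u) v = bar (P.pair u (ψstar v))) (c : C) :
    ψstar (bstar c) = bstar c := by
  refine bstar.repr.injective (Finsupp.ext fun d => ?_)
  rw [← PrecanonicalR.pair_eq_repr_of_dual hbstar, ← PrecanonicalR.pair_eq_repr_of_dual hbstar,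
    ← bar_bar (P.pair _ _), ← hstar_def, hb, hbstar]
  split_ifs <;> simp

lemma dual_upper_triangular
    (hbstar : ∀ c c' : C, P.pair (b c) (bstar c') = if c = c' then 1 else 0)
    (htri : ∀ c, b c - P.std c ∈ Submodule.span Rq (P.std '' {c' : C | c' < c}))
    (hastar : ∀ c c' : C, P.pair (P.std c) (astar c') = if c = c' then 1 else 0) (c : C) :
    bstar c - astar c ∈ Submodule.span Rq (astar '' {c' : C | c < c'}) := by
  have hcoord := PrecanonicalR.pair_eq_repr_of_dual hastar (bstar c)
  have hlow : ∀ d, ¬ c ≤ d → P.pair (P.std d) (bstar c) = 0 := by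
    refine PrecanonicalR.pair_std_eq_zero_of_isLowerSet (U := {d | ¬ c ≤ d}) htri
      (fun d d' hle hd hc => hd (hc.trans hle)) ?_ fun d hd => ?_
    · exact (astar.repr (bstar c)).support.finite_toSet.subset fun d hd => by
        simpa [hcoord] using hd
    · rw [hbstar, if_neg fun h => hd h.ge]
  have hdiag : astar.repr (bstar c) c = 1 := by
    rw [← hcoord, PrecanonicalR.pair_std_eq_pair_of_forall_lt (htri c)
      fun d hdc => hlow d hdc.not_ge, hbstar, if_pos rfl]
  refine astar.sub_mem_span_image_of_repr hdiag fun d hdc hd => ?_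
  rw [← hcoord] at hd
  exact lt_of_le_of_ne (not_not.mp (mt (hlow d) hd)) (Ne.symm hdc)

lemma dual_almost_orthonormal
    (hbstar : ∀ c c' : C, P.pair (b c) (bstar c') = if c = c' then 1 else 0)
    (hG : ∀ c c' : C, DeltaPlusLowR (P.pair (b c) (b c')) (if c = c' then 1 else 0))
    (c c' : C) :
    DeltaPlusLowR (bar (P.pair (bstar c) (bstar c'))) (if c = c' then 1 else 0) := by
  rw [PrecanonicalR.pair_eq_bar_repr_of_dual hbstar, bar_bar, deltaPlusLowR_iff]
  have hG' : ∀ d e, P.pair (b d) (b e) - (if d = e then 1 else 0) ∈ degreeLE (-1) := by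
    intro d e
    simpa [apply_ite LaurentPolynomial.C] using (deltaPlusLowR_iff _ _).mp (hG d e)
  have hs : ∀ d, ∑ e ∈ (b.repr (bstar c)).support, b.repr (bstar c) e * P.pair (b d) (b e) =
      if d = c then 1 else 0 := fun d => by
    rw [← P.pair_eq_sum_repr_right, hbstar]
  simpa [Finsupp.single_apply, apply_ite LaurentPolynomial.C] using
    sub_single_mem_degreeLE_of_almost_identity _ hG' _ c hs c'

end DualBasis

theorem dual_canonical_basis_general (P : PrecanonicalR C V) (b : Module.Basis C Rq V)
    (hb : IsCanonicalBasisR P b)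
    (ψstar : V →+ V)
    (hstar_def : ∀ u v : V, P.pair (P.ψ u) v = bar (P.pair u (ψstar v)))
    (astar bstar : Module.Basis C Rq V)
    (hastar : ∀ c c' : C, P.pair (P.std c) (astar c') = if c = c' then 1 else 0)
    (hbstar : ∀ c c' : C, P.pair (b c) (bstar c') = if c = c' then 1 else 0) :
    (∀ c : C, ψstar (bstar c) = bstar c) ∧
    (∀ c : C, bstar c - astar c ∈
      Submodule.span Rq (astar '' {c' : C | c < c'})) ∧
    (∀ c c' : C,
      DeltaPlusLowR (bar (P.pair (bstar c) (bstar c'))) (if c = c' then 1 else 0)) :=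
  ⟨dual_bar_invariant hbstar hb.bar_invariant hstar_def,
    dual_upper_triangular hbstar hb.upper_triangular hastar,
    dual_almost_orthonormal hbstar hb.almost_orthonormal⟩

/-- Suppose `b` is a canonical basis for `P`, `ψ*` is the dual
bar-involution (an antilinear involution with `⟨ψ(u),v⟩ = bar⟨u,ψ*(v)⟩`),
and `a*`, `b*` are the right dual bases of the standard and canonical bases
(`⟨a_c, a*_{c'}⟩ = δ_{c,c'}` and `⟨b_c, b*_{c'}⟩ = δ_{c,c'}`).  Then `b*` is a
canonical basis for the dual pre-canonical structure:  each `b*_c` is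
`ψ*`-invariant, `b*_c ∈ a*_c + Σ ℤ[q,q⁻¹]·a*_{c'}` with the sum over `c'` below
`c` in the *opposite* order (i.e. `c < c'`), and the `b*_c` are almost
orthonormal for the bar-conjugated pairing. -/
theorem dual_canonical_basis (P : PrecanonicalR C V) (b : Module.Basis C Rq V)
    (hb : IsCanonicalBasisR P b)
    (ψstar : V →+ V)
    (hstar_invol : ∀ v, ψstar (ψstar v) = v)
    (hstar_antilinear : ∀ (r : Rq) (v : V), ψstar (r • v) = bar r • ψstar v)
    (hstar_def : ∀ u v : V, P.pair (P.ψ u) v = bar (P.pair u (ψstar v)))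
    (astar bstar : Module.Basis C Rq V)
    (hastar : ∀ c c' : C, P.pair (P.std c) (astar c') = if c = c' then 1 else 0)
    (hbstar : ∀ c c' : C, P.pair (b c) (bstar c') = if c = c' then 1 else 0) :
    (∀ c : C, ψstar (bstar c) = bstar c) ∧
    (∀ c : C, bstar c - astar c ∈
      Submodule.span Rq (astar '' {c' : C | c < c'})) ∧
    (∀ c c' : C,
      DeltaPlusLowR (bar (P.pair (bstar c) (bstar c'))) (if c = c' then 1 else 0)) :=
  dual_canonical_basis_general P b hb ψstar hstar_def astar bstar hastar hbstar

end
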